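/- Let X be a topological space and let i be a natural number. Define Ran_{≤ i}(X) as the set of nonempty finite subsets S ⊆ X with |S| ≤ i that meet every connected component of X, with the quotient topology induced by the image maps X^I → Ran_{≤i}(X) for all sets I of cardinality i (the coarsest topology making these maps continuous). If f : X → Y is an open embedding surjective on connected components, then the induced map Ran_{≤i}(f) : Ran_{≤i}(X) → Ran_{≤i}(Y), S ↦ f(S), is injective and continuous. -/

import Mathlib

open Topology
/-- The bounded Ran space `Ran_{≤ i}(X)`, as a set: nonempty finite subsets `S ⊆ X` of
cardinality at most `i` which meet every connected component of `X`. -/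
def RanSet (X : Type*) [TopologicalSpace X] (i : ℕ) : Set (Set X) :=
  {S | S.Finite ∧ S.Nonempty ∧ S.ncard ≤ i ∧ ∀ x : X, ∃ s ∈ S, s ∈ connectedComponent x}

/-- The topology on `Ran_{≤ i}(X)` induced by the image maps `X^I → Ran_{≤ i}(X)`
for `I` of cardinality `i` (the quotient topology: the finest/universal topology making
these maps continuous, defined on tuples whose image lies in `Ran_{≤ i}(X)`). -/
def ranTopology (X : Type*) [TopologicalSpace X] (i : ℕ) :
    TopologicalSpace (RanSet X i) :=
  TopologicalSpace.coinduced
    (fun g : {g : Fin i → X // Set.range g ∈ RanSet X i} =>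
      (⟨Set.range g.1, g.2⟩ : RanSet X i))
    inferInstance

namespace RanSet

variable {X Y : Type*} [TopologicalSpace X] [TopologicalSpace Y] {i : ℕ} {f : X → Y}

/-- The image of `connectedComponent x` under a continuous map lies in
`connectedComponent (f x)`, and `hsurj` makes every component of `Y` of this form. -/
theorem image_mem (hf : Continuous f) (hsurj : ∀ y : Y, ∃ x : X, f x ∈ connectedComponent y)
    {S : Set X} (hS : S ∈ RanSet X i) : f '' S ∈ RanSet Y i := by
  obtain ⟨hfin, hne, hcard, hcomp⟩ := hS
  refine ⟨hfin.image f, hne.image f, (Set.ncard_image_le hfin).trans hcard, fun y => ?_⟩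
  obtain ⟨x, hx⟩ := hsurj y
  obtain ⟨s, hsS, hsx⟩ := hcomp x
  have hfs : f s ∈ connectedComponent (f x) :=
    hf.image_connectedComponent_subset x ⟨s, hsx, rfl⟩
  exact ⟨f s, ⟨s, hsS, rfl⟩, connectedComponent_eq hx ▸ hfs⟩

def map (hf : Continuous f) (hsurj : ∀ y : Y, ∃ x : X, f x ∈ connectedComponent y) :
    RanSet X i → RanSet Y i :=
  fun S => ⟨f '' S, image_mem hf hsurj S.2⟩

variable (hf : Continuous f) (hsurj : ∀ y : Y, ∃ x : X, f x ∈ connectedComponent y)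

theorem coe_map (S : RanSet X i) : (map hf hsurj S : Set Y) = f '' S := rfl

theorem map_injective (hinj : Function.Injective f) :
    Function.Injective (map (i := i) hf hsurj) := fun _ _ h =>
  Subtype.ext (Set.image_injective.2 hinj (congrArg Subtype.val h))

/-- Composing with `f` lifts `map` to the tuple spaces `X^i → Y^i` defining the topologies,
so continuity follows from the universal property of the coinduced topology. -/
theorem continuous_map :
    @Continuous _ _ (ranTopology X i) (ranTopology Y i) (map hf hsurj) := by
  let := ranTopology Y i
  rw [ranTopology, continuous_coinduced_dom]
  have hlift : Continuous fun g : {g : Fin i → X // Set.range g ∈ RanSet X i} =>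
      (⟨f ∘ g.1, Set.range_comp f g.1 ▸ image_mem hf hsurj g.2⟩ :
        {g : Fin i → Y // Set.range g ∈ RanSet Y i}) :=
    (continuous_pi fun j => hf.comp ((continuous_apply j).comp continuous_subtype_val)).subtype_mk _
  have hrange : Continuous
      fun g : {g : Fin i → Y // Set.range g ∈ RanSet Y i} => (⟨Set.range g.1, g.2⟩ : RanSet Y i) :=
    continuous_coinduced_rng
  exact (hrange.comp hlift).congr fun g => Subtype.ext (Set.range_comp f g.1)

end RanSet

/-- If `f : X → Y` is an open embedding which is surjective on connected components, then
the induced map `Ran_{≤i}(f) : Ran_{≤i}(X) → Ran_{≤i}(Y)`, `S ↦ f(S)`, is well defined,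
injective and continuous. -/
theorem ranMap_injective_continuous {X Y : Type*} [TopologicalSpace X] [TopologicalSpace Y]
    (i : ℕ) (f : X → Y) (hf : IsOpenEmbedding f)
    (hsurj : ∀ y : Y, ∃ x : X, f x ∈ connectedComponent y) :
    ∃ F : RanSet X i → RanSet Y i,
      (∀ S : RanSet X i, (F S : Set Y) = f '' (S : Set X)) ∧
      Function.Injective F ∧
      @Continuous _ _ (ranTopology X i) (ranTopology Y i) F :=
  ⟨RanSet.map hf.continuous hsurj, RanSet.coe_map hf.continuous hsurj,
    RanSet.map_injective hf.continuous hsurj hf.injective,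
    RanSet.continuous_map hf.continuous hsurj⟩
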